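/- Let M ∈ {0,*,?}^{p×q} be a pattern matrix with associated directed graph G(M), and suppose the nodes are partitioned into black and white nodes; let D be the p×p diagonal 0-1 matrix with D_{ℓℓ} = 1 exactly when node ℓ is black. If node i has exactly one white out-neighbor j and the edge (i,j) corresponds to a * entry of M (i.e., M_{ji} = *), then for every real matrix A ∈ P(M) and every z ∈ ℝ^p: z^T [A D] = 0 if and only if z^T [A (D + e_j e_j^T)] = 0, where e_j is the j-th standard basis vector. -/

import Mathlib

/-!
Both sides say that `zᵀ A = 0` and that `z` vanishes on the black nodes; the right side also
asks `z j = 0`. That is automatic: once `z` vanishes on the black nodes, `j` is the only node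
that can contribute to column `i` of `zᵀ A`, so `0 = (zᵀ A)ᵢ = z j * A j i` with `A j i ≠ 0`.
-/

inductive PSym | zero | star | any
deriving DecidableEq

namespace PSym

def symAdd : PSym → PSym → PSym
  | zero, x => x
  | x, zero => x
  | _, _ => any

def symMul : PSym → PSym → PSym
  | zero, _ => zero
  | _, zero => zero
  | star, star => star
  | _, _ => any

instance : Zero PSym := ⟨zero⟩
instance : Add PSym := ⟨symAdd⟩

instance : AddCommMonoid PSym where
  add_assoc a b c := by cases a <;> cases b <;> cases c <;> rfl
  zero_add a := by cases a <;> rfl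
  add_zero a := by cases a <;> rfl
  add_comm a b := by cases a <;> cases b <;> rfl
  nsmul := nsmulRec

end PSym

/-- The pattern class of a pattern matrix. -/
def PatClass {p q : Type*} (M : Matrix p q PSym) : Set (Matrix p q ℝ) :=
  {A | ∀ i j, (M i j = PSym.zero → A i j = 0) ∧ (M i j = PSym.star → A i j ≠ 0)}

/-- Product of pattern matrices. -/
def patMul {p q s : ℕ} (M : Matrix (Fin p) (Fin q) PSym) (N : Matrix (Fin q) (Fin s) PSym) :
    Matrix (Fin p) (Fin s) PSym :=
  fun i j => ∑ k, PSym.symMul (M i k) (N k j)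

/-- A 1×q pattern vector `M` is independent of an r×q pattern matrix `N`. -/
def Independent {q r : ℕ} (M : Matrix (Fin 1) (Fin q) PSym) (N : Matrix (Fin r) (Fin q) PSym) : Prop :=
  ∀ M₀ ∈ PatClass M, ∀ N₀ ∈ PatClass N, ∀ (z₁ : ℝ) (z₂ : Fin r → ℝ),
    (∀ j, z₁ * M₀ 0 j + ∑ i, z₂ i * N₀ i j = 0) → z₁ = 0

open Matrix

theorem Matrix.vecMul_diagonal_indicator_eq_zero_iff {n R : Type*} [Fintype n] [DecidableEq n]
    [NonAssocSemiring R] (s : Set n) [DecidablePred (· ∈ s)] (z : n → R) :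
    vecMul z (diagonal fun ℓ => if ℓ ∈ s then (1 : R) else 0) = 0 ↔ ∀ ℓ ∈ s, z ℓ = 0 := by
  simp [funext_iff, vecMul_diagonal]

theorem Matrix.diagonal_indicator_add_single {n R : Type*} [DecidableEq n] [AddZeroClass R]
    [One R] {s : Set n} [DecidablePred (· ∈ s)] {j : n} (hj : j ∉ s) :
    (diagonal fun ℓ => if ℓ ∈ s then (1 : R) else 0) + single j j 1 =
      diagonal fun ℓ => if ℓ ∈ insert j s then (1 : R) else 0 := by
  rw [← diagonal_single, diagonal_add]
  congr 1
  funext ℓ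
  rcases eq_or_ne ℓ j with rfl | hℓ
  · simp [hj]
  · simp [hℓ]

theorem PatClass.eq_zero_of_vecMul_eq_zero {p q : Type*} [Fintype p] {M : Matrix p q PSym}
    {A : Matrix p q ℝ} (hA : A ∈ PatClass M) {z : p → ℝ} (hzA : vecMul z A = 0) {i : q} {j : p}
    (hj_star : M j i = PSym.star) (hsupp : ∀ ℓ ≠ j, M ℓ i ≠ PSym.zero → z ℓ = 0) : z j = 0 := by
  have hcol : vecMul z A i = z j * A j i := by
    refine Finset.sum_eq_single j (fun ℓ _ hℓj => ?_) (by simp)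
    by_cases hℓ : M ℓ i = PSym.zero
    · simp [(hA ℓ i).1 hℓ]
    · simp [hsupp ℓ hℓj hℓ]
  have hzero : z j * A j i = 0 := by rw [← hcol, hzA, Pi.zero_apply]
  exact (mul_eq_zero.1 hzero).resolve_right ((hA j i).2 hj_star)

/-- color-change soundness step, Lemma 7 of the paper: if node
`i` (a column of `M`) has exactly one white out-neighbor `j` with `M j i = *`,
then for every `A ∈ P(M)` and every `z`, `zᵀ[A D] = 0` iff
`zᵀ[A (D + eⱼeⱼᵀ)] = 0`, where `D` is the diagonal 0-1 matrix of black nodes. -/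
theorem kernel_unchanged_of_color_change {p q : ℕ}
    (M : Matrix (Fin p) (Fin q) PSym) (black : Set (Fin p)) [DecidablePred (· ∈ black)]
    (i : Fin q) (j : Fin p)
    (hj_star : M j i = PSym.star) (hj_white : j ∉ black)
    (hunique : ∀ j' : Fin p, M j' i ≠ PSym.zero → j' ∉ black → j' = j) :
    ∀ A ∈ PatClass M, ∀ z : Fin p → ℝ,
      (Matrix.vecMul z A = 0 ∧
        Matrix.vecMul z (Matrix.diagonal fun ℓ => if ℓ ∈ black then (1:ℝ) else 0) = 0) ↔
      (Matrix.vecMul z A = 0 ∧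
        Matrix.vecMul z ((Matrix.diagonal fun ℓ => if ℓ ∈ black then (1:ℝ) else 0)
          + Matrix.single j j 1) = 0) := by
  intro A hA z
  rw [diagonal_indicator_add_single hj_white, vecMul_diagonal_indicator_eq_zero_iff,
    vecMul_diagonal_indicator_eq_zero_iff, Set.forall_mem_insert]
  refine and_congr_right fun hzA => ⟨fun hblack => ⟨?_, hblack⟩, And.right⟩
  refine PatClass.eq_zero_of_vecMul_eq_zero hA hzA hj_star fun ℓ hℓj hℓ => ?_
  by_cases hb : ℓ ∈ black
  · exact hblack ℓ hb
  · exact absurd (hunique ℓ hℓ hb) hℓj
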